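/- Let H̃ = X G Xᵀ be positive definite and fix an index q and scalar c. The minimizer of Δw ↦ ‖(ΔwX − r)√G‖₂² over row vectors Δw subject to the linear constraint Δw e_qᵀ = c is Δw* = r G Xᵀ H̃^{-1} + ((c − r G Xᵀ H̃^{-1} e_qᵀ) / (H̃^{-1})_{qq}) · (H̃^{-1})_{q,:}, where e_q is the q-th standard basis row vector and (H̃^{-1})_{q,:} denotes the q-th row of H̃^{-1}. -/

import Mathlib

open Matrix

/-- Closed-form importance-aware constrained weight update (Equation 7 of VLMQ). -/
theorem constrained_minimizer_formula (Ci N : ℕ)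
    (X : Matrix (Fin Ci) (Fin N) ℝ) (r : Matrix (Fin 1) (Fin N) ℝ)
    (g : Fin N → ℝ) (hg : ∀ n, 0 < g n)
    (hH : (X * Matrix.diagonal g * Xᵀ).PosDef)
    (q : Fin Ci) (c : ℝ) :
    let H := X * Matrix.diagonal g * Xᵀ
    let rGXtHinv := r * Matrix.diagonal g * Xᵀ * H⁻¹
    let Δwstar : Matrix (Fin 1) (Fin Ci) ℝ :=
      fun _ j => rGXtHinv 0 j
        + ((c - rGXtHinv 0 q) / (H⁻¹ q q)) * H⁻¹ q j
    Δwstar 0 q = c ∧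
    ∀ Δw : Matrix (Fin 1) (Fin Ci) ℝ, Δw 0 q = c →
      ∑ j, (((Δwstar * X - r) * Matrix.diagonal (fun n => Real.sqrt (g n))) 0 j) ^ 2
        ≤ ∑ j, (((Δw * X - r) * Matrix.diagonal (fun n => Real.sqrt (g n))) 0 j) ^ 2 := by
  intro H rGXtHinv Δwstar
  set G : Matrix (Fin N) (Fin N) ℝ := Matrix.diagonal g with hG
  have hHs : Hᵀ = H := by
    show (X * G * Xᵀ)ᵀ = X * G * Xᵀ
    simp [Matrix.transpose_mul, hG, Matrix.diagonal_transpose, Matrix.mul_assoc]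
  have hdet : IsUnit H.det := hH.det_pos.ne'.isUnit
  have hinv : H * H⁻¹ = 1 := Matrix.mul_nonsing_inv _ hdet
  have hinvs : (H⁻¹)ᵀ = H⁻¹ := by rw [Matrix.transpose_nonsing_inv, hHs]
  -- positivity of the (q,q) entry of H⁻¹
  have hqq : 0 < H⁻¹ q q := by
    have := hH.inv.dotProduct_mulVec_pos (x := Pi.single q 1) (by
      intro h
      have := congrFun h q
      simp [Pi.single_apply] at this)
    simpa [dotProduct, Matrix.mulVec, Pi.single_apply, Finset.sum_ite_eq,
      Finset.sum_ite_eq'] using this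
  have hqqne : H⁻¹ q q ≠ 0 := ne_of_gt hqq
  set μ : ℝ := (c - rGXtHinv 0 q) / (H⁻¹ q q) with hμ
  have hpart1 : Δwstar 0 q = c := by
    show rGXtHinv 0 q + μ * H⁻¹ q q = c
    rw [hμ, div_mul_cancel₀ _ hqqne]; ring
  refine ⟨hpart1, ?_⟩
  intro Δw hc
  -- matrix form of Δwstar
  set E : Matrix (Fin Ci) (Fin 1) ℝ := fun i _ => if i = q then 1 else 0 with hE
  have hΔws : Δwstar = r * G * Xᵀ * H⁻¹
      + μ • (Matrix.of fun (_ : Fin 1) j => H⁻¹ q j) := by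
    ext i j
    fin_cases i
    rfl
  -- key stationarity identity
  have hcol : (Matrix.of fun j (_ : Fin 1) => H⁻¹ q j) = H⁻¹ * E := by
    ext j k
    have : H⁻¹ j q = H⁻¹ q j := by
      conv_lhs => rw [← hinvs]
      rfl
    rw [Matrix.mul_apply]
    simp [hE, this]
  have hkey : H * Δwstarᵀ = X * G * rᵀ + μ • E := by
    rw [hΔws]
    rw [Matrix.transpose_add, Matrix.transpose_smul, Matrix.mul_add, Matrix.mul_smul]
    congr 1
    · calc H * (r * G * Xᵀ * H⁻¹)ᵀ = (H * (H⁻¹)ᵀ) * (X * Gᵀ * rᵀ) := by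
            simp [Matrix.transpose_mul, Matrix.mul_assoc]
      _ = X * G * rᵀ := by
            rw [hinvs, hinv, Matrix.one_mul, hG, Matrix.diagonal_transpose, Matrix.mul_assoc]
    · have : (Matrix.of fun (_ : Fin 1) j => H⁻¹ q j)ᵀ = H⁻¹ * E := hcol
      rw [this, ← Matrix.mul_assoc, hinv, Matrix.one_mul]
  -- reduction of the objective to a quadratic form
  have hobj : ∀ M : Matrix (Fin 1) (Fin N) ℝ,
      ∑ j, ((M * Matrix.diagonal (fun n => Real.sqrt (g n))) 0 j) ^ 2
        = (M * G * Mᵀ) 0 0 := by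
    intro M
    rw [Matrix.mul_apply]
    refine Finset.sum_congr rfl fun j _ => ?_
    have h1 : (M * Matrix.diagonal (fun n => Real.sqrt (g n))) 0 j
        = M 0 j * Real.sqrt (g j) := by simp [Matrix.mul_diagonal]
    have h2 : (M * G) 0 j = M 0 j * g j := by simp [hG, Matrix.mul_diagonal]
    rw [h1, h2, Matrix.transpose_apply, mul_pow, Real.sq_sqrt (hg j).le]
    ring
  rw [hobj, hobj]
  -- decomposition
  set d : Matrix (Fin 1) (Fin Ci) ℝ := Δw - Δwstar with hd
  have hdq : d 0 q = 0 := by simp [hd, hc, hpart1]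
  have hsplit : Δw * X - r = d * X + (Δwstar * X - r) := by
    rw [hd, Matrix.sub_mul]; abel
  -- cross term vanishes
  have hcross : (d * X * G * (Δwstar * X - r)ᵀ) 0 0 = 0 := by
    have h1 : X * G * (Δwstar * X - r)ᵀ = μ • E := by
      rw [Matrix.transpose_sub, Matrix.transpose_mul, Matrix.mul_sub]
      have : X * G * (Xᵀ * Δwstarᵀ) = H * Δwstarᵀ := by
        rw [show H = X * G * Xᵀ from rfl]
        simp [Matrix.mul_assoc]
      rw [this, hkey]; abel
    rw [Matrix.mul_assoc, Matrix.mul_assoc, ← Matrix.mul_assoc X, h1, Matrix.mul_smul]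
    rw [Matrix.smul_apply, Matrix.mul_apply]
    simp [hE, hdq]
  have hT : ((Δwstar * X - r) * G * (d * X)ᵀ) = (d * X * G * (Δwstar * X - r)ᵀ)ᵀ := by
    simp [Matrix.transpose_mul, hG, Matrix.diagonal_transpose, Matrix.mul_assoc]
  have hcross' : ((Δwstar * X - r) * G * (d * X)ᵀ) 0 0 = 0 := by
    have := congrFun (congrFun hT 0) 0
    rw [this, Matrix.transpose_apply]
    exact hcross
  -- quadratic term nonnegative
  have hquad : 0 ≤ (d * X * G * (d * X)ᵀ) 0 0 := by
    have h2 : d * X * G * (d * X)ᵀ = d * H * dᵀ := by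
      rw [show H = X * G * Xᵀ from rfl]
      simp [Matrix.transpose_mul, Matrix.mul_assoc]
    rw [congrFun (congrFun h2 0) 0]
    have := hH.posSemidef.dotProduct_mulVec_nonneg (fun i => d 0 i)
    have heq : (d * H * dᵀ) 0 0 = (fun i => d 0 i) ⬝ᵥ (H *ᵥ fun i => d 0 i) := by
      simp only [Matrix.mul_apply, dotProduct, Matrix.mulVec, Matrix.transpose_apply,
        dotProduct, Finset.sum_mul, Finset.mul_sum]
      rw [Finset.sum_comm]
      congr 1; ext i; congr 1; ext j; ring
    rw [heq]
    simpa using this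
  -- put it together
  have hfin : (( Δw * X - r) * G * (Δw * X - r)ᵀ) 0 0
      = (d * X * G * (d * X)ᵀ) 0 0 + ((Δwstar * X - r) * G * (Δwstar * X - r)ᵀ) 0 0 := by
    have expand : ∀ A B : Matrix (Fin 1) (Fin N) ℝ, (A + B) * G * (A + B)ᵀ
        = A * G * Aᵀ + (A * G * Bᵀ + B * G * Aᵀ) + B * G * Bᵀ := by
      intro A B
      rw [Matrix.transpose_add, Matrix.add_mul, Matrix.add_mul, Matrix.mul_add, Matrix.mul_add]
      abel
    rw [hsplit, expand]
    simp only [Matrix.add_apply]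
    rw [hcross, hcross']
    ring
  rw [hfin]
  linarith
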